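/- arXiv:1712.04425 — 2 statements merged into one kernel-verified Lean document; each statement's English description precedes it below -/
import Mathlib

section
/- The sequence of factorials {n!} is not locally Benford distributed of order 2 and does not have Benford distributed waiting times. -/
open Filter

/-- `x` has leading digit `d` in base 10: `d·10^k ≤ x < (d+1)·10^k` for some integer `k`. -/
def HasLeadingDigit (x : ℝ) (d : ℕ) : Prop :=
  ∃ k : ℤ, (d : ℝ) * 10 ^ k ≤ x ∧ x < ((d : ℝ) + 1) * 10 ^ k

/-- The Benford frequency `P(d) = log₁₀ (1 + 1/d)` of digit `d`. -/
noncomputable def benfordP (d : ℕ) : ℝ := Real.logb 10 (1 + 1 / (d : ℝ))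

/-- A sequence is Benford distributed if for each digit `d ∈ {1,…,9}` the density of
indices `n` with `D(a_n) = d` equals `P(d)`. -/
def BenfordDistributed (a : ℕ → ℝ) : Prop :=
  ∀ d : ℕ, 1 ≤ d → d ≤ 9 →
    Tendsto
      (fun N : ℕ =>
        (Nat.card {n : ℕ | 1 ≤ n ∧ n ≤ N ∧ HasLeadingDigit (a n) d} : ℝ) / N)
      atTop (nhds (benfordP d))

/-- A sequence is locally Benford distributed of order `k` if every `k`-tuple of digits
in `{1,…,9}` occurs among leading digits of `k` consecutive terms with density
`P(d₀)⋯P(d_{k-1})`. -/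
def LocallyBenfordDistributed (a : ℕ → ℝ) (k : ℕ) : Prop :=
  ∀ d : Fin k → ℕ, (∀ i, 1 ≤ d i ∧ d i ≤ 9) →
    Tendsto
      (fun N : ℕ =>
        (Nat.card {n : ℕ | 1 ≤ n ∧ n ≤ N ∧
            ∀ i : Fin k, HasLeadingDigit (a (n + (i : ℕ))) (d i)} : ℝ) / N)
      atTop (nhds (∏ i : Fin k, benfordP (d i)))

/-- `waitingTime a d i` is the waiting time `w_i(d) = n_{i+1}^{(d)} - n_i^{(d)}`, where
`n_1^{(d)} < n_2^{(d)} < ⋯` enumerates `{n ∈ ℕ, n ≥ 1 : D(a_n) = d}`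
(the `j`-th element of this set, 1-indexed, being `Nat.nth · (j-1)`). -/
noncomputable def waitingTime (a : ℕ → ℝ) (d : ℕ) (i : ℕ) : ℕ :=
  Nat.nth (fun n => 1 ≤ n ∧ HasLeadingDigit (a n) d) i -
    Nat.nth (fun n => 1 ≤ n ∧ HasLeadingDigit (a n) d) (i - 1)

/-- A sequence has Benford distributed waiting times if for each digit `d ∈ {1,…,9}`
the waiting times between occurrences of leading digit `d` take value `k` with density
`P(d)(1-P(d))^{k-1}`. -/
def BenfordWaitingTimes (a : ℕ → ℝ) : Prop :=
  ∀ d : ℕ, 1 ≤ d → d ≤ 9 → ∀ k : ℕ, 1 ≤ k →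
    Tendsto
      (fun N : ℕ =>
        (Nat.card {i : ℕ | 1 ≤ i ∧ i ≤ N ∧ waitingTime a d i = k} : ℝ) / N)
      atTop (nhds (benfordP d * (1 - benfordP d) ^ (k - 1)))

/-- A sequence `u` of real numbers is uniformly distributed modulo 1. -/
def UniformlyDistributedMod1 (u : ℕ → ℝ) : Prop :=
  ∀ t : ℝ, 0 ≤ t → t ≤ 1 →
    Tendsto
      (fun N : ℕ =>
        (Nat.card {n : ℕ | 1 ≤ n ∧ n ≤ N ∧ Int.fract (u n) ≤ t} : ℝ) / N)
      atTop (nhds t)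

/-- `nthPrime n` is the `n`-th prime (1-indexed): `nthPrime 1 = 2`, `nthPrime 2 = 3`, … -/
noncomputable def nthPrime (n : ℕ) : ℕ := Nat.nth Nat.Prime (n - 1)

/-! Multiplying `n!` by `n + 1 ∈ [10^j, c · 10^j]` multiplies its mantissa by a factor
in `[1, c]`. For `c = 4`, a mantissa below `2` becomes one below `8`, so `D(n!) = 1` and
`D((n+1)!) = 9` never happen together for `10^j < n < 4 · 10^j`: the count of such `n ≤ N`
stalls while `N` grows fourfold. For `c = 2`, every carry past a power of ten lands on leading
digit `1`, while from a mantissa in `[2, 4)` two further steps cannot carry; so two `1`s at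
distance `2` force a `1` in between, and no waiting time equals `2` inside `[10^j, 2 · 10^j]`.
The factors in this window still carry at least `10^(j-2)` times, so the index of the
occurrences grows by a fixed proportion across it while the count of waiting times `2` stalls.
Either stall rules out a positive density. -/

open Nat

theorem benfordP_pos {d : ℕ} (hd : 1 ≤ d) : 0 < benfordP d :=
  Real.logb_pos (by norm_num) (lt_add_of_pos_right _ (one_div_pos.2 (Nat.cast_pos.2 hd)))

theorem benfordP_lt_one {d : ℕ} (hd : 1 ≤ d) : benfordP d < 1 := by
  have hd' : (1 : ℝ) ≤ d := by exact_mod_cast hd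
  rw [benfordP, Real.logb_lt_iff_lt_rpow (by norm_num) (by positivity)]
  have : (d : ℝ)⁻¹ ≤ 1 := inv_le_one_of_one_le₀ hd'
  norm_num
  linarith

theorem not_tendsto_card_div_of_gaps {P : ℕ → Prop} {L c : ℝ} (hL : 0 < L) (hc : 1 < c)
    {u v : ℕ → ℕ} (hu : Tendsto u atTop atTop) (huv : ∀ᶠ i in atTop, c * u i ≤ v i)
    (hP : ∀ᶠ i in atTop, ∀ n, u i < n → n ≤ v i → ¬ P n) :
    ¬ Tendsto (fun N : ℕ => (Nat.card {n : ℕ | 1 ≤ n ∧ n ≤ N ∧ P n} : ℝ) / N) atTop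
      (nhds L) := by
  intro hlim
  set F : ℕ → ℝ := fun N => Nat.card {n : ℕ | 1 ≤ n ∧ n ≤ N ∧ P n}
  have hle : ∀ᶠ i in atTop, u i ≤ v i := huv.mono fun i hi => by
    exact_mod_cast (le_mul_of_one_le_left (Nat.cast_nonneg _) hc.le).trans hi
  have hv : Tendsto v atTop atTop := tendsto_atTop_mono' _ hle hu
  have hF : ∀ᶠ i in atTop, F (v i) ≤ F (u i) := by
    filter_upwards [hP] with i hi
    refine Nat.cast_le.2 (Nat.card_mono ((Set.finite_Iic (u i)).subset fun n hn => hn.2.1) ?_)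
    rintro n ⟨hn1, hnv, hn⟩
    exact ⟨hn1, not_lt.1 fun hnu => hi n hnu hnv hn, hn⟩
  have hratio : ∀ᶠ i in atTop, F (v i) / v i ≤ F (u i) / u i / c := by
    filter_upwards [hF, huv, hu.eventually_gt_atTop 0] with i hF hcuv hu0
    have hu0 : (0 : ℝ) < u i := by exact_mod_cast hu0
    rw [div_div, mul_comm]
    exact div_le_div₀ (by positivity) hF (by positivity) hcuv
  have : L ≤ L / c := le_of_tendsto_of_tendsto (hlim.comp hv) ((hlim.comp hu).div_const c) hratio
  exact (div_lt_self hL hc).not_ge this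

theorem hasLeadingDigit_natCast_iff {x d Q : ℕ} (hd : 1 ≤ d) (hd9 : d ≤ 9) (hQ : 10 ^ Q ≤ x)
    (hQ' : x < 10 ^ (Q + 1)) :
    HasLeadingDigit (x : ℝ) d ↔ d * 10 ^ Q ≤ x ∧ x < (d + 1) * 10 ^ Q := by
  constructor
  · rintro ⟨k, hk, hk'⟩
    have hd' : (1 : ℝ) ≤ d := by exact_mod_cast hd
    have hd9' : (d : ℝ) + 1 ≤ 10 := by exact_mod_cast Nat.succ_le_succ hd9
    have hpos : (0 : ℝ) < 10 ^ k := by positivity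
    have hQR : (10 : ℝ) ^ (Q : ℤ) ≤ x := by rw [zpow_natCast]; exact_mod_cast hQ
    have hQR' : (x : ℝ) < 10 ^ ((Q : ℤ) + 1) := by
      rw [← Nat.cast_one, ← Nat.cast_add, zpow_natCast]; exact_mod_cast hQ'
    have hkQ : k < Q + 1 := (zpow_lt_zpow_iff_right₀ (by norm_num)).1 <|
      calc (10 : ℝ) ^ k ≤ d * 10 ^ k := le_mul_of_one_le_left hpos.le hd'
        _ ≤ x := hk
        _ < _ := hQR'
    have hQk : (Q : ℤ) < k + 1 := (zpow_lt_zpow_iff_right₀ (by norm_num)).1 <|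
      calc (10 : ℝ) ^ (Q : ℤ) ≤ x := hQR
        _ < (d + 1) * 10 ^ k := hk'
        _ ≤ 10 * 10 ^ k := by gcongr
        _ = 10 ^ (k + 1) := by rw [zpow_add_one₀ (by norm_num), mul_comm]
    obtain rfl : k = Q := by omega
    rw [zpow_natCast] at hk hk'
    exact ⟨by exact_mod_cast hk, by exact_mod_cast hk'⟩
  · rintro ⟨h, h'⟩
    exact ⟨Q, by rw [zpow_natCast]; exact_mod_cast h, by rw [zpow_natCast]; exact_mod_cast h'⟩

theorem hasLeadingDigit_natCast_iff_log {x d : ℕ} (hx : x ≠ 0) (hd : 1 ≤ d) (hd9 : d ≤ 9) :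
    HasLeadingDigit (x : ℝ) d ↔
      d * 10 ^ Nat.log 10 x ≤ x ∧ x < (d + 1) * 10 ^ Nat.log 10 x :=
  hasLeadingDigit_natCast_iff hd hd9 (Nat.pow_log_le_self 10 hx)
    (Nat.lt_pow_succ_log_self (by norm_num) x)

theorem not_hasLeadingDigit_nine_factorial_succ {j n : ℕ} (hn : 10 ^ j ≤ n)
    (hn' : n < 4 * 10 ^ j) (h1 : HasLeadingDigit (n ! : ℝ) 1) :
    ¬ HasLeadingDigit ((n + 1)! : ℝ) 9 := by
  obtain ⟨hK, hK'⟩ :=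
    (hasLeadingDigit_natCast_iff_log n.factorial_ne_zero le_rfl (by norm_num)).1 h1
  set K := Nat.log 10 n !
  have hlo : 10 ^ (j + K) ≤ (n + 1)! := by
    rw [factorial_succ, pow_add]
    exact Nat.mul_le_mul (by omega) (by simpa using hK)
  have hhi : (n + 1)! < 9 * 10 ^ (j + K) := by
    rw [factorial_succ, pow_add]
    calc (n + 1) * n ! < (n + 1) * (2 * 10 ^ K) := by gcongr
      _ ≤ 9 * (10 ^ j * 10 ^ K) := by nlinarith
  rw [hasLeadingDigit_natCast_iff (by norm_num) le_rfl hlo (by rw [pow_succ]; omega)]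
  omega

theorem factorial_not_locallyBenford_two :
    ¬ LocallyBenfordDistributed (fun n : ℕ => (n ! : ℝ)) 2 := by
  intro h
  have hd : ∀ i, 1 ≤ ![1, 9] i ∧ ![1, 9] i ≤ 9 := by decide
  refine not_tendsto_card_div_of_gaps (Finset.prod_pos fun i _ => benfordP_pos (hd i).1)
    (by norm_num : (1 : ℝ) < 3) (u := fun j => 10 ^ j) (v := fun j => 4 * 10 ^ j - 1)
    (tendsto_pow_atTop_atTop_of_one_lt (by norm_num)) ?_ ?_ (h _ hd)
  · refine Eventually.of_forall fun j => ?_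
    have := Nat.one_le_pow j 10 (by norm_num)
    exact_mod_cast (show 3 * 10 ^ j ≤ 4 * 10 ^ j - 1 by omega)
  · exact Eventually.of_forall fun j n hjn hnj hn =>
      not_hasLeadingDigit_nine_factorial_succ hjn.le (by omega) (by simpa using hn 0)
        (by simpa using hn 1)

theorem hasLeadingDigit_one_factorial_succ {j x : ℕ} (hx : 10 ^ j ≤ x)
    (hx' : x + 2 ≤ 2 * 10 ^ j) (h0 : HasLeadingDigit (x ! : ℝ) 1)
    (h2 : HasLeadingDigit ((x + 2)! : ℝ) 1) :
    HasLeadingDigit ((x + 1)! : ℝ) 1 := by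
  obtain ⟨hK, hK'⟩ :=
    (hasLeadingDigit_natCast_iff_log x.factorial_ne_zero le_rfl (by norm_num)).1 h0
  set K := Nat.log 10 x !
  have hlo : 10 ^ (j + K) ≤ (x + 1)! := by
    rw [factorial_succ, pow_add]
    exact Nat.mul_le_mul (by omega) (by simpa using hK)
  have hhi : (x + 1)! < 2 * 2 * 10 ^ (j + K) := by
    rw [factorial_succ, pow_add]
    calc (x + 1) * x ! < (x + 1) * (2 * 10 ^ K) := by gcongr
      _ ≤ 2 * 2 * (10 ^ j * 10 ^ K) := by nlinarith
  rw [hasLeadingDigit_natCast_iff le_rfl (by norm_num) hlo (by rw [pow_succ]; omega)]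
  refine ⟨by omega, not_le.1 fun hmid => ?_⟩
  -- Otherwise `(x + 1)!` starts with a digit in `[2, 4)`, and multiplying by `x + 2 ≤ 2 · 10^j`
  -- cannot carry it past the next power of ten.
  have hlo₂ : 2 * 10 ^ (j + (j + K)) ≤ (x + 2)! := by
    rw [factorial_succ, pow_add]
    calc 2 * (10 ^ j * 10 ^ (j + K)) = 10 ^ j * (2 * 10 ^ (j + K)) := by ring
      _ ≤ (x + 1 + 1) * (x + 1)! := Nat.mul_le_mul (by omega) (by simpa using hmid)
  have hhi₂ : (x + 2)! < 8 * 10 ^ (j + (j + K)) := by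
    rw [factorial_succ, pow_add]
    calc (x + 1 + 1) * (x + 1)! < (x + 1 + 1) * (2 * 2 * 10 ^ (j + K)) := by gcongr
      _ ≤ 8 * (10 ^ j * 10 ^ (j + K)) := by nlinarith
  have := (hasLeadingDigit_natCast_iff (Q := j + (j + K)) le_rfl (by norm_num) (by omega)
    (by rw [pow_succ]; omega)).1 h2
  omega

/-- The predicate whose `Nat.nth` enumerates `waitingTime (fun n => (n ! : ℝ)) 1`. -/
def FactorialLeadsWithOne (n : ℕ) : Prop := 1 ≤ n ∧ HasLeadingDigit (n ! : ℝ) 1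

noncomputable instance : DecidablePred FactorialLeadsWithOne := Classical.decPred _

/-- The exponent grows by `j + 1` only through a carry, which lands on leading digit `1`
because `n + 1 ≤ 2 · 10^j`. -/
theorem log_factorial_succ_le {j n : ℕ} (hn : n + 1 ≤ 2 * 10 ^ j) :
    Nat.log 10 (n + 1)! ≤
      Nat.log 10 n ! + j + if FactorialLeadsWithOne (n + 1) then 1 else 0 := by
  set E := Nat.log 10 n !
  have hhi : (n + 1)! < 2 * 10 ^ (E + j + 1) := by
    rw [factorial_succ, pow_succ, pow_add]
    calc (n + 1) * n ! < (n + 1) * 10 ^ (E + 1) :=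
          Nat.mul_lt_mul_of_pos_left (Nat.lt_pow_succ_log_self (by norm_num) _) (by omega)
      _ ≤ 2 * 10 ^ j * 10 ^ (E + 1) := by gcongr
      _ = 2 * (10 ^ E * 10 ^ j * 10) := by ring
  have hlog : Nat.log 10 (n + 1)! < E + j + 2 :=
    Nat.log_lt_of_lt_pow (factorial_ne_zero _) (by rw [pow_succ]; omega)
  split_ifs with hone
  · omega
  refine not_lt.1 fun hcarry => hone ⟨by omega, ?_⟩
  have hlo : 10 ^ (E + j + 1) ≤ (n + 1)! :=
    Nat.pow_le_of_le_log (factorial_ne_zero _) (by omega)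
  exact (hasLeadingDigit_natCast_iff le_rfl (by norm_num) hlo (by rw [pow_succ]; omega)).2
    ⟨by omega, hhi⟩

theorem add_count_le_of_forall_le_add {f : ℕ → ℕ} {p : ℕ → Prop} [DecidablePred p]
    {a c : ℕ} :
    ∀ k, (∀ n, a ≤ n → n < a + k → f (n + 1) ≤ f n + c + if p (n + 1) then 1 else 0) →
      f (a + k) + count p (a + 1) ≤ f a + c * k + count p (a + k + 1)
  | 0, _ => by simp
  | k + 1, hstep => by
    have ih := add_count_le_of_forall_le_add k fun n ha hn => hstep n ha (by omega)
    have hk := hstep (a + k) (by omega) (by omega)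
    rw [← add_assoc, count_succ p (a + k + 1)]
    split_ifs at hk ⊢ <;> linarith

theorem factorial_mul_pow_mul_pow_le_factorial (T : ℕ) :
    (100 * T)! * (100 * T) ^ (100 * T) * 10 ^ T ≤ (200 * T)! := by
  have h₁ : (100 * T)! * (100 * T + 1) ^ (50 * T) ≤ (150 * T)! := by
    simpa [show 100 * T + 50 * T = 150 * T by ring] using
      factorial_mul_pow_le_factorial (m := 100 * T) (n := 50 * T)
  have h₂ : (150 * T)! * (150 * T + 1) ^ (50 * T) ≤ (200 * T)! := by
    simpa [show 150 * T + 50 * T = 200 * T by ring] using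
      factorial_mul_pow_le_factorial (m := 150 * T) (n := 50 * T)
  have hgain : (100 * T) ^ (50 * T) * 10 ^ T ≤ (150 * T) ^ (50 * T) := by
    rw [pow_mul, pow_mul, ← mul_pow]
    gcongr
    calc (100 * T) ^ 50 * 10 = (100 ^ 50 * 10) * T ^ 50 := by ring
      _ ≤ 150 ^ 50 * T ^ 50 := by gcongr; norm_num
      _ = (150 * T) ^ 50 := by ring
  calc (100 * T)! * (100 * T) ^ (100 * T) * 10 ^ T
      = (100 * T)! * (100 * T) ^ (50 * T) * ((100 * T) ^ (50 * T) * 10 ^ T) := by ring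
    _ ≤ (100 * T)! * (100 * T + 1) ^ (50 * T) * (150 * T) ^ (50 * T) := by
        gcongr
        omega
    _ ≤ (150 * T)! * (150 * T + 1) ^ (50 * T) := by gcongr; omega
    _ ≤ (200 * T)! := h₂

/-- The term `10 ^ i` comes from the factors in `(150 · 10^i, 200 · 10^i]`, each at least
`3/2 · 10^(i+2)`, with `(3/2)^50 ≥ 10`. -/
theorem log_factorial_add_le_log_factorial (i : ℕ) :
    Nat.log 10 (100 * 10 ^ i)! + (i + 2) * (100 * 10 ^ i) + 10 ^ i ≤
      Nat.log 10 (200 * 10 ^ i)! := by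
  refine Nat.le_log_of_pow_le (by norm_num) ?_
  calc 10 ^ (Nat.log 10 (100 * 10 ^ i)! + (i + 2) * (100 * 10 ^ i) + 10 ^ i)
      = 10 ^ Nat.log 10 (100 * 10 ^ i)! * (100 * 10 ^ i) ^ (100 * 10 ^ i) * 10 ^ 10 ^ i := by
        rw [pow_add, pow_add, pow_mul, pow_add 10 i 2]
        ring
    _ ≤ (100 * 10 ^ i)! * (100 * 10 ^ i) ^ (100 * 10 ^ i) * 10 ^ 10 ^ i := by
        gcongr
        exact Nat.pow_log_le_self 10 (factorial_ne_zero _)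
    _ ≤ (200 * 10 ^ i)! := factorial_mul_pow_mul_pow_le_factorial _

theorem count_factorialLeadsWithOne_add_pow_le (i : ℕ) :
    count FactorialLeadsWithOne (100 * 10 ^ i + 1) + 10 ^ i ≤
      count FactorialLeadsWithOne (200 * 10 ^ i + 1) := by
  have hstep := add_count_le_of_forall_le_add (f := fun n => Nat.log 10 n !)
    (p := FactorialLeadsWithOne) (a := 100 * 10 ^ i) (c := i + 2) (100 * 10 ^ i)
    fun n _ hn => log_factorial_succ_le (by rw [pow_add]; omega)
  have hgain := log_factorial_add_le_log_factorial i
  rw [show 100 * 10 ^ i + 100 * 10 ^ i = 200 * 10 ^ i by ring] at hstep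
  omega

theorem pow_le_count_factorialLeadsWithOne (i : ℕ) :
    10 ^ i ≤ count FactorialLeadsWithOne (100 * 10 ^ (i + 1)) :=
  calc 10 ^ i ≤ count FactorialLeadsWithOne (200 * 10 ^ i + 1) := by
        have := count_factorialLeadsWithOne_add_pow_le i
        omega
    _ ≤ count FactorialLeadsWithOne (100 * 10 ^ (i + 1)) :=
        count_monotone _ (show 200 * 10 ^ i + 1 ≤ 100 * 10 ^ (i + 1) by
          rw [pow_succ]; have := Nat.one_le_pow i 10 (by norm_num); omega)

theorem factorialLeadsWithOne_infinite : (Set.ofPred FactorialLeadsWithOne).Infinite := by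
  intro hfin
  set N := hfin.toFinset.card
  have := (pow_le_count_factorialLeadsWithOne N).trans (count_le_card hfin _)
  exact (Nat.lt_pow_self (by norm_num)).not_ge this

theorem nth_ne_nth_pred_add_two {p : ℕ → Prop} [DecidablePred p]
    (hp : (Set.ofPred p).Infinite) {lo hi m : ℕ}
    (hfill : ∀ x, lo ≤ x → x + 2 ≤ hi → p x → p (x + 2) → p (x + 1))
    (hlo : count p lo < m) (hhi : m < count p (hi + 1)) :
    nth p m ≠ nth p (m - 1) + 2 := by
  intro hgap
  set x := nth p (m - 1)
  have hx : p x := nth_mem_of_infinite hp _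
  have hx₂ : p (x + 2) := hgap ▸ nth_mem_of_infinite hp m
  have hlo' : lo ≤ x := (count_le_iff_le_nth hp).1 (by omega)
  have hhi' : nth p m < hi + 1 := (lt_nth_iff_count_lt hp).1 hhi
  have hcount : count p (x + 1) = m := by
    rw [count_succ, if_pos hx, count_nth_of_infinite hp]
    omega
  have := nth_count (hfill x hlo' (by omega) hx hx₂)
  rw [hcount] at this
  omega

theorem factorial_not_benfordWaitingTimes :
    ¬ BenfordWaitingTimes (fun n : ℕ => (n ! : ℝ)) := by
  intro h
  have hL : 0 < benfordP 1 * (1 - benfordP 1) ^ (2 - 1) := by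
    have := benfordP_lt_one le_rfl
    have := benfordP_pos le_rfl
    norm_num
    nlinarith
  refine not_tendsto_card_div_of_gaps hL (by norm_num : (1 : ℝ) < 201 / 200)
    (u := fun i => count FactorialLeadsWithOne (100 * 10 ^ i))
    (v := fun i => count FactorialLeadsWithOne (200 * 10 ^ i + 1) - 1) ?_ ?_ ?_
    (h 1 le_rfl (by norm_num) 2 (by norm_num))
  · exact (tendsto_add_atTop_iff_nat 1).1 <|
      tendsto_atTop_mono pow_le_count_factorialLeadsWithOne <|
        tendsto_pow_atTop_atTop_of_one_lt (by norm_num)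
  · filter_upwards [eventually_ge_atTop 1] with i hi
    have h10 : 10 ≤ 10 ^ i := by simpa using Nat.pow_le_pow_right (by norm_num : 0 < 10) hi
    have hu : count FactorialLeadsWithOne (100 * 10 ^ i) ≤ 100 * 10 ^ i := count_le _
    have hwin := count_factorialLeadsWithOne_add_pow_le i
    have := count_monotone FactorialLeadsWithOne (show 100 * 10 ^ i ≤ 100 * 10 ^ i + 1 by omega)
    rw [div_mul_eq_mul_div, div_le_iff₀ (by norm_num)]
    exact_mod_cast (by omega : 201 * count FactorialLeadsWithOne (100 * 10 ^ i) ≤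
      (count FactorialLeadsWithOne (200 * 10 ^ i + 1) - 1) * 200)
  · refine Eventually.of_forall fun i m hum hmv hw => ?_
    change nth FactorialLeadsWithOne m - nth FactorialLeadsWithOne (m - 1) = 2 at hw
    refine nth_ne_nth_pred_add_two factorialLeadsWithOne_infinite
      (lo := 100 * 10 ^ i) (hi := 200 * 10 ^ i) ?_ hum (by omega) (by omega)
    rintro x hx hx' ⟨-, h₀⟩ ⟨-, h₂⟩
    have h100 : 10 ^ (i + 2) = 100 * 10 ^ i := by ring
    exact ⟨by omega,
      hasLeadingDigit_one_factorial_succ (j := i + 2) (by omega) (by omega) h₀ h₂⟩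

/-- The factorials are not locally Benford distributed of order 2 and do not have
Benford distributed waiting times. -/
theorem factorial_not_locallyBenford :
    ¬ LocallyBenfordDistributed (fun n : ℕ => (n.factorial : ℝ)) 2 ∧
      ¬ BenfordWaitingTimes (fun n : ℕ => (n.factorial : ℝ)) :=
  ⟨factorial_not_locallyBenford_two, factorial_not_benfordWaitingTimes⟩
end

section
/- The sequence {2^{n log n}} (with n ≥ 2) is not locally Benford distributed of order 2 and does not have Benford distributed waiting times. -/
open Filter

/-!
Write `c = log₁₀ 2` and `x n = log₁₀ (2 ^ (n log n)) = c n log n`; the leading digit of the `n`-th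
term is `1` exactly when `fract (x n) < c`. The increments `x (n + 1) - x n ≈ c (log n + 1)` grow so
slowly that for infinitely many `m` their fractional parts stay in `[2/5, 41/100]` on the whole
block `[64 m, 65 m]`. There a leading `1` is always followed by a leading digit in `2, …, 5`, and
each five consecutive indices contain a leading `1`. So on these blocks, whose length is
proportional to their position, the pairs `(1, d)` with `2 ≤ d ≤ 5` have frequency about `1/5`,
more than `P(1) (P(2) + ⋯ + P(5)) = log₁₀ 2 · log₁₀ 3 < 1/6`; and all waiting times between
consecutive leading `1`s lie in `2, …, 5`, values of total Benford frequency at most `1 - P(1)`.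
-/

open Real Finset

lemma div_lt_logb_of_pow_lt {b x : ℝ} (hb : 1 < b) {p q : ℕ} (hq : 0 < q)
    (h : b ^ p < x ^ q) : (p / q : ℝ) < logb b x := by
  have hlog : (p : ℝ) < q * logb b x := by
    simpa [logb_pow, logb_self_eq_one hb] using logb_lt_logb hb (by positivity : 0 < b ^ p) h
  rwa [div_lt_iff₀ (by positivity), mul_comm]

lemma logb_lt_div_of_pow_lt {b x : ℝ} (hb : 1 < b) (hx : 0 < x) {p q : ℕ} (hq : 0 < q)
    (h : x ^ q < b ^ p) : logb b x < p / q := by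
  have hlog : q * logb b x < p := by
    simpa [logb_pow, logb_self_eq_one hb] using logb_lt_logb hb (by positivity : 0 < x ^ q) h
  rwa [lt_div_iff₀ (by positivity), mul_comm]

lemma one_quarter_lt_logb_ten_two : 1 / 4 < logb 10 2 := by
  exact_mod_cast div_lt_logb_of_pow_lt (p := 1) (q := 4) (by norm_num) (by norm_num)
    (by norm_num)

lemma logb_ten_two_lt_one_third : logb 10 2 < 1 / 3 := by
  exact_mod_cast logb_lt_div_of_pow_lt (p := 1) (q := 3) (by norm_num) (by norm_num) (by norm_num)
    (by norm_num)

lemma logb_ten_three_lt_half : logb 10 3 < 1 / 2 := by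
  exact_mod_cast logb_lt_div_of_pow_lt (p := 1) (q := 2) (by norm_num) (by norm_num) (by norm_num)
    (by norm_num)

lemma three_quarters_lt_logb_ten_six : 3 / 4 < logb 10 6 := by
  exact_mod_cast div_lt_logb_of_pow_lt (p := 3) (q := 4) (by norm_num) (by norm_num)
    (by norm_num)

lemma le_mul_zpow_iff_logb {x y : ℝ} (hx : 0 < x) (hy : 0 < y) (k : ℤ) :
    y * 10 ^ k ≤ x ↔ logb 10 y + k ≤ logb 10 x := by
  rw [← logb_le_logb (b := 10) (by norm_num) (by positivity) hx, logb_mul hy.ne' (by positivity),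
    ← rpow_intCast, logb_rpow (by norm_num) (by norm_num)]

lemma lt_mul_zpow_iff_logb {x y : ℝ} (hx : 0 < x) (hy : 0 < y) (k : ℤ) :
    x < y * 10 ^ k ↔ logb 10 x < logb 10 y + k := by
  rw [← logb_lt_logb_iff (b := 10) (by norm_num) hx (by positivity),
    logb_mul hy.ne' (by positivity), ← rpow_intCast, logb_rpow (by norm_num) (by norm_num)]

lemma hasLeadingDigit_iff_fract_logb {x : ℝ} (hx : 0 < x) {d : ℕ} (hd₁ : 1 ≤ d)
    (hd₉ : d ≤ 9) :
    HasLeadingDigit x d ↔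
      logb 10 d ≤ Int.fract (logb 10 x) ∧ Int.fract (logb 10 x) < logb 10 (d + 1) := by
  have hd : (1 : ℝ) ≤ d := by exact_mod_cast hd₁
  have hlow : 0 ≤ logb 10 d := logb_nonneg (by norm_num) hd
  have hhigh : logb 10 (d + 1) ≤ 1 := by
    rw [logb_le_iff_le_rpow (by norm_num) (by positivity), rpow_one]
    exact_mod_cast Nat.succ_le_succ hd₉
  simp only [HasLeadingDigit, le_mul_zpow_iff_logb hx (by positivity : (0 : ℝ) < d),
    lt_mul_zpow_iff_logb hx (by positivity : (0 : ℝ) < d + 1), ← Int.self_sub_floor]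
  constructor
  · rintro ⟨k, hk₁, hk₂⟩
    rw [show ⌊logb 10 x⌋ = k from Int.floor_eq_iff.2 ⟨by linarith, by linarith⟩]
    constructor <;> linarith
  · rintro ⟨h₁, h₂⟩
    exact ⟨⌊logb 10 x⌋, by linarith, by linarith⟩

lemma hasLeadingDigit_one_iff {x : ℝ} (hx : 0 < x) :
    HasLeadingDigit x 1 ↔ Int.fract (logb 10 x) < logb 10 2 := by
  rw [hasLeadingDigit_iff_fract_logb hx le_rfl (by norm_num)]
  norm_num [Int.fract_nonneg]

lemma exists_hasLeadingDigit_of_fract_logb_mem {x : ℝ} (hx : 0 < x)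
    (h : Int.fract (logb 10 x) ∈ Set.Ico (logb 10 2) (logb 10 6)) :
    ∃ d ∈ Icc 2 5, HasLeadingDigit x d := by
  set f := Int.fract (logb 10 x)
  have h₂ : 2 ≤ (10 : ℝ) ^ f := (logb_le_iff_le_rpow (by norm_num) (by norm_num)).1 h.1
  have h₆ : (10 : ℝ) ^ f < 6 :=
    (lt_logb_iff_rpow_lt (b := 10) (y := 6) (by norm_num) (by norm_num)).1 h.2
  have hpos : 0 ≤ (10 : ℝ) ^ f := by positivity
  have hd₂ : 2 ≤ ⌊(10 : ℝ) ^ f⌋₊ := Nat.le_floor (by exact_mod_cast h₂)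
  have hd₅ : ⌊(10 : ℝ) ^ f⌋₊ ≤ 5 :=
    Nat.le_of_lt_succ ((Nat.floor_lt hpos).2 (by exact_mod_cast h₆))
  refine ⟨_, mem_Icc.2 ⟨hd₂, hd₅⟩, ?_⟩
  rw [hasLeadingDigit_iff_fract_logb hx (by omega) (by omega),
    logb_le_iff_le_rpow (by norm_num) (by positivity),
    lt_logb_iff_rpow_lt (by norm_num) (by positivity)]
  exact ⟨Nat.floor_le hpos, Nat.lt_floor_add_one _⟩

section Counting

variable (P : ℕ → Prop) [DecidablePred P]

lemma natCard_setOf_eq_card_filter_Ioc (N : ℕ) :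
    Nat.card {n : ℕ | 1 ≤ n ∧ n ≤ N ∧ P n} = #{n ∈ Ioc 0 N | P n} := by
  have : {n : ℕ | 1 ≤ n ∧ n ≤ N ∧ P n} = ↑({n ∈ Ioc 0 N | P n}) := by
    ext n
    simp only [Set.mem_ofPred_eq, coe_filter, mem_Ioc, Nat.pos_iff_ne_zero,
      Nat.one_le_iff_ne_zero, and_assoc]
  rw [this, Nat.card_coe_set_eq, Set.ncard_coe_finset]

lemma card_filter_Ioc_add_card_filter_Ioc {a b c : ℕ} (hab : a ≤ b) (hbc : b ≤ c) :
    #{n ∈ Ioc a b | P n} + #{n ∈ Ioc b c | P n} = #{n ∈ Ioc a c | P n} := by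
  rw [← Ioc_union_Ioc_eq_Ioc hab hbc, filter_union,
    card_union_of_disjoint (disjoint_filter_filter (Ioc_disjoint_Ioc.2 (by simp)))]

lemma cast_card_filter_Ioc_zero_sub {A B : ℕ} (h : A ≤ B) :
    (#{n ∈ Ioc 0 B | P n} : ℝ) - #{n ∈ Ioc 0 A | P n} = #{n ∈ Ioc A B | P n} := by
  rw [← card_filter_Ioc_add_card_filter_Ioc P (Nat.zero_le A) h]
  push_cast
  ring

lemma count_succ_add_card_filter_Ioc {A B : ℕ} (h : A ≤ B) :
    Nat.count P (A + 1) + #{n ∈ Ioc A B | P n} = Nat.count P (B + 1) := by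
  have hunion : range (A + 1) ∪ Ioc A B = range (B + 1) := by
    ext n
    simp only [mem_union, mem_range, mem_Ioc]
    omega
  have hdisj : Disjoint (range (A + 1)) (Ioc A B) :=
    disjoint_left.2 fun n h₁ h₂ ↦ by simp only [mem_range, mem_Ioc] at h₁ h₂; omega
  rw [Nat.count_eq_card_filter_range, Nat.count_eq_card_filter_range, ← hunion, filter_union,
    card_union_of_disjoint (disjoint_filter_filter hdisj)]

end Counting

lemma le_card_filter_Ioc_of_forall_exists {P : ℕ → Prop} [DecidablePred P] {A L : ℕ} :
    ∀ j : ℕ, (∀ i < j, ∃ n ∈ Ioc (A + L * i) (A + L * (i + 1)), P n) →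
      j ≤ #{n ∈ Ioc A (A + L * j) | P n}
  | 0, _ => Nat.zero_le _
  | j + 1, h => by
    obtain ⟨n, hn, hPn⟩ := h j (by omega)
    rw [← card_filter_Ioc_add_card_filter_Ioc P (Nat.le_add_right A (L * j))
      (by rw [mul_add_one]; omega)]
    have hj := le_card_filter_Ioc_of_forall_exists j fun i hi ↦ h i (by omega)
    have hone : 0 < #{n ∈ Ioc (A + L * j) (A + L * (j + 1)) | P n} :=
      card_pos.2 ⟨n, mem_filter.2 ⟨hn, hPn⟩⟩
    omega

lemma le_of_tendsto_div_of_windows {u : ℕ → ℝ} {p q α : ℝ} (hα : 0 < α)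
    (hu : Tendsto (fun N : ℕ ↦ u N / N) atTop (nhds p))
    (hwin : ∀ N : ℕ, ∃ A ≥ N, ∃ B : ℕ, (1 + α) * A ≤ B ∧ q * (B - A) ≤ u B - u A) :
    q ≤ p := by
  by_contra! hpq
  set ε := (q - p) / 2 * (α / (2 + α))
  have hε : 0 < ε := mul_pos (by linarith) (by positivity)
  obtain ⟨N₀, hN₀⟩ := Metric.tendsto_atTop.1 hu ε hε
  obtain ⟨A, hA, B, hAB, hq⟩ := hwin (N₀ + 1)
  have hA₀ : (0 : ℝ) < A := by exact_mod_cast (by omega : 0 < A)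
  have hAB' : A ≤ B := by exact_mod_cast (show (A : ℝ) ≤ B by nlinarith)
  have hB₀ : (0 : ℝ) < B := by exact_mod_cast (by omega : 0 < B)
  have huA : (p - ε) * A < u A := by
    have := (abs_lt.1 (hN₀ A (by omega))).1
    rw [lt_sub_iff_add_lt, lt_div_iff₀ hA₀] at this
    linarith
  have huB : u B < (p + ε) * B := by
    have := (abs_lt.1 (hN₀ B (by omega))).2
    rw [sub_lt_iff_lt_add, div_lt_iff₀ hB₀] at this
    linarith
  have hwindow : ε * (A + B) ≤ (q - p) / 2 * (B - A) := by
    rw [mul_assoc]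
    refine mul_le_mul_of_nonneg_left ?_ (by linarith)
    rw [div_mul_eq_mul_div, div_le_iff₀ (by positivity)]
    nlinarith
  nlinarith

-- Modulo 1 the shifts `2 k / 5`, `k = 1, …, 5`, run through all multiples of `1 / 5`.
lemma exists_fract_add_two_fifths_mul_lt (f : ℝ) :
    ∃ k ∈ Icc (1 : ℕ) 5, Int.fract (f + 2 / 5 * k) < 1 / 5 := by
  have key : ∀ (k : ℕ) (z : ℤ), 0 ≤ Int.fract f + 2 / 5 * k - z →
      Int.fract f + 2 / 5 * k - z < 1 / 5 → Int.fract (f + 2 / 5 * k) < 1 / 5 := by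
    intro k z h₀ h₁
    rwa [Int.fract_eq_iff.2 ⟨h₀, by linarith, ⌊f⌋ + z, by
      rw [← Int.self_sub_floor]; push_cast; ring⟩]
  have h₀ := Int.fract_nonneg f
  have h₁ := Int.fract_lt_one f
  rcases lt_or_ge (Int.fract f) (1 / 5) with h | h
  · exact ⟨5, by simp, key 5 2 (by push_cast; linarith) (by push_cast; linarith)⟩
  rcases lt_or_ge (Int.fract f) (2 / 5) with h' | h'
  · exact ⟨2, by simp, key 2 1 (by push_cast; linarith) (by push_cast; linarith)⟩
  rcases lt_or_ge (Int.fract f) (3 / 5) with h'' | h''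
  · exact ⟨4, by simp, key 4 2 (by push_cast; linarith) (by push_cast; linarith)⟩
  rcases lt_or_ge (Int.fract f) (4 / 5) with h''' | h'''
  · exact ⟨1, by simp, key 1 1 (by push_cast; linarith) (by push_cast; linarith)⟩
  · exact ⟨3, by simp, key 3 2 (by push_cast; linarith) (by push_cast; linarith)⟩

lemma exists_eq_add_int_of_fract_sub_mem {x : ℕ → ℝ} {a η : ℝ} {n : ℕ} :
    ∀ k : ℕ, (∀ i < k, Int.fract (x (n + i + 1) - x (n + i)) ∈ Set.Icc a (a + η)) →
      ∃ z : ℤ, ∃ e ∈ Set.Icc 0 (k * η), x (n + k) = x n + k * a + e + z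
  | 0, _ => ⟨0, 0, by simp, by simp⟩
  | k + 1, h => by
    obtain ⟨z, e, ⟨he₀, he₁⟩, hk⟩ :=
      exists_eq_add_int_of_fract_sub_mem k fun i hi ↦ h i (by omega)
    obtain ⟨hs₀, hs₁⟩ := h k (by omega)
    set s := x (n + k + 1) - x (n + k)
    refine ⟨z + ⌊s⌋, e + (Int.fract s - a), ⟨by linarith, by push_cast; linarith⟩, ?_⟩
    rw [← Int.self_sub_floor, ← add_assoc]
    push_cast
    linarith

-- For `x = log₁₀ ∘ a`: on `[A, B]` every ratio `a (n + 1) / a n` has mantissa between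
-- `10 ^ (2 / 5) ≈ 2.51` and `10 ^ (41 / 100) ≈ 2.57`.
def StepsNearTwoFifths (x : ℕ → ℝ) (A B : ℕ) : Prop :=
  ∀ n, A ≤ n → n ≤ B → Int.fract (x (n + 1) - x n) ∈ Set.Icc (2 / 5 : ℝ) (41 / 100)

namespace StepsNearTwoFifths

variable {x : ℕ → ℝ} {A B n : ℕ}

lemma mono (h : StepsNearTwoFifths x A B) {A' B' : ℕ} (hA : A ≤ A') (hB : B' ≤ B) :
    StepsNearTwoFifths x A' B' :=
  fun n hn₁ hn₂ ↦ h n (hA.trans hn₁) (hn₂.trans hB)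

lemma fract_succ_mem_Icc (h : StepsNearTwoFifths x A B) (hA : A ≤ n) (hB : n ≤ B)
    (hx : Int.fract (x n) < 1 / 3) : Int.fract (x (n + 1)) ∈ Set.Icc (2 / 5 : ℝ) (3 / 4) := by
  obtain ⟨hs₀, hs₁⟩ := h n hA hB
  have h₀ := Int.fract_nonneg (x n)
  have hsum : Int.fract (x (n + 1)) = Int.fract (x n) + Int.fract (x (n + 1) - x n) :=
    Int.fract_eq_iff.2 ⟨by linarith, by linarith, ⌊x n⌋ + ⌊x (n + 1) - x n⌋, by
      rw [← Int.self_sub_floor, ← Int.self_sub_floor]; push_cast; ring⟩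
  rw [hsum]
  constructor <;> linarith

lemma exists_fract_lt (h : StepsNearTwoFifths x A B) (hA : A ≤ n) (hB : n + 4 ≤ B) :
    ∃ k ∈ Icc 1 5, Int.fract (x (n + k)) < 1 / 4 := by
  obtain ⟨k, hk, hgrid⟩ := exists_fract_add_two_fifths_mul_lt (x n)
  refine ⟨k, hk, ?_⟩
  obtain ⟨-, hk₅⟩ := mem_Icc.1 hk
  have hsteps : ∀ i < k, Int.fract (x (n + i + 1) - x (n + i)) ∈
      Set.Icc (2 / 5) (2 / 5 + 1 / 100) := fun i hi ↦ by
    rw [show (2 / 5 : ℝ) + 1 / 100 = 41 / 100 by norm_num]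
    exact h (n + i) (by omega) (by omega)
  obtain ⟨z, e, ⟨he₀, he₁⟩, hxk⟩ := exists_eq_add_int_of_fract_sub_mem k hsteps
  have hk5 : (k : ℝ) ≤ 5 := by exact_mod_cast hk₅
  have he : Int.fract e = e := Int.fract_eq_self.2 ⟨he₀, by linarith⟩
  calc Int.fract (x (n + k)) = Int.fract (x n + 2 / 5 * k + e) := by
        rw [hxk, Int.fract_add_intCast]; ring_nf
    _ ≤ Int.fract (x n + 2 / 5 * k) + Int.fract e := Int.fract_add_le _ _
    _ < 1 / 4 := by linarith

variable {a : ℕ → ℝ}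

lemma hasLeadingDigit_succ_of_one (ha : ∀ n, 0 < a n)
    (h : StepsNearTwoFifths (fun n ↦ logb 10 (a n)) A B) (hA : A ≤ n) (hB : n ≤ B)
    (h₁ : HasLeadingDigit (a n) 1) :
    (∃ d ∈ Icc 2 5, HasLeadingDigit (a (n + 1)) d) ∧ ¬HasLeadingDigit (a (n + 1)) 1 := by
  have hc₁ := logb_ten_two_lt_one_third
  have hc₆ := three_quarters_lt_logb_ten_six
  rw [hasLeadingDigit_one_iff (ha n)] at h₁
  obtain ⟨hf₀, hf₁⟩ := h.fract_succ_mem_Icc hA hB (by linarith)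
  refine ⟨exists_hasLeadingDigit_of_fract_logb_mem (ha _) ⟨by linarith, by linarith⟩, ?_⟩
  rw [hasLeadingDigit_one_iff (ha _)]
  linarith

lemma exists_hasLeadingDigit_one (ha : ∀ n, 0 < a n)
    (h : StepsNearTwoFifths (fun n ↦ logb 10 (a n)) A B) (hA : A ≤ n) (hB : n + 4 ≤ B) :
    ∃ k ∈ Icc 1 5, HasLeadingDigit (a (n + k)) 1 := by
  obtain ⟨k, hk, hlt⟩ := h.exists_fract_lt hA hB
  refine ⟨k, hk, (hasLeadingDigit_one_iff (ha _)).2 ?_⟩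
  linarith [one_quarter_lt_logb_ten_two]

open Classical in
lemma le_card_filter_hasLeadingDigit_one (ha : ∀ n, 0 < a n)
    (h : StepsNearTwoFifths (fun n ↦ logb 10 (a n)) A B) {j : ℕ} (hj : A + 5 * j ≤ B) :
    j ≤ #{n ∈ Ioc A B | HasLeadingDigit (a n) 1} := by
  refine (le_card_filter_Ioc_of_forall_exists j fun i hi ↦ ?_).trans
    (card_le_card (filter_subset_filter _ (Ioc_subset_Ioc_right hj)))
  obtain ⟨k, hk, hdigit⟩ := h.exists_hasLeadingDigit_one ha (n := A + 5 * i) (by omega)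
    (by omega)
  obtain ⟨hk₁, hk₅⟩ := mem_Icc.1 hk
  exact ⟨A + 5 * i + k, mem_Ioc.2 ⟨by omega, by omega⟩, hdigit⟩


open Classical in
lemma le_sum_card_filter_pair (ha : ∀ n, 0 < a n)
    (h : StepsNearTwoFifths (fun n ↦ logb 10 (a n)) A B) {j : ℕ} (hj : A + 5 * j ≤ B) :
    j ≤ ∑ d ∈ Icc 2 5,
      #{n ∈ Ioc A B | HasLeadingDigit (a n) 1 ∧ HasLeadingDigit (a (n + 1)) d} := by
  refine (h.le_card_filter_hasLeadingDigit_one ha hj).trans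
    ((card_le_card fun n hn ↦ ?_).trans card_biUnion_le)
  obtain ⟨hn, h₁⟩ := mem_filter.1 hn
  obtain ⟨⟨d, hd, hsucc⟩, -⟩ :=
    h.hasLeadingDigit_succ_of_one ha (mem_Ioc.1 hn).1.le (mem_Ioc.1 hn).2 h₁
  exact mem_biUnion.2 ⟨d, hd, mem_filter.2 ⟨hn, h₁, hsucc⟩⟩

open Classical in
lemma waitingTime_mem_Icc (ha : ∀ n, 0 < a n)
    (hS : {n | 1 ≤ n ∧ HasLeadingDigit (a n) 1}.Infinite)
    (h : StepsNearTwoFifths (fun n ↦ logb 10 (a n)) A (B + 4)) {i : ℕ}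
    (hi₁ : Nat.count (fun n ↦ 1 ≤ n ∧ HasLeadingDigit (a n) 1) (A + 1) < i)
    (hi₂ : i ≤ Nat.count (fun n ↦ 1 ≤ n ∧ HasLeadingDigit (a n) 1) (B + 1)) :
    waitingTime a 1 i ∈ Icc 2 5 := by
  obtain ⟨i, rfl⟩ : ∃ i', i = i' + 1 := ⟨i - 1, by omega⟩
  have hAn := (Nat.count_le_iff_le_nth hS).1 (Nat.lt_succ_iff.1 hi₁)
  have hnB := Nat.nth_lt_of_lt_count hi₂
  have hn := Nat.nth_mem_of_infinite hS i
  have hnext := Nat.nth_mem_of_infinite hS (i + 1)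
  have hnext_gt := Nat.nth_strictMono hS (lt_add_one i)
  simp only [waitingTime, add_tsub_cancel_right, mem_Icc]
  set n := Nat.nth (fun n ↦ 1 ≤ n ∧ HasLeadingDigit (a n) 1) i
  set n' := Nat.nth (fun n ↦ 1 ≤ n ∧ HasLeadingDigit (a n) 1) (i + 1)
  obtain ⟨-, hnot⟩ := h.hasLeadingDigit_succ_of_one ha (by omega) (by omega) hn.2
  obtain ⟨k, hk, hdigit⟩ := h.exists_hasLeadingDigit_one ha (n := n) (by omega) (by omega)
  obtain ⟨hk₁, hk₅⟩ := mem_Icc.1 hk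
  have hnext_le : n' ≤ n + k := by
    by_contra! hlt
    have := Nat.le_nth_of_lt_nth_succ hlt ⟨by omega, hdigit⟩
    omega
  have hnext_ne : n' ≠ n + 1 := fun heq ↦ hnot (heq ▸ hnext.2)
  omega

open Classical in
lemma exists_waitingTime_window (ha : ∀ n, 0 < a n)
    (hS : {n | 1 ≤ n ∧ HasLeadingDigit (a n) 1}.Infinite) {j : ℕ}
    (h : StepsNearTwoFifths (fun n ↦ logb 10 (a n)) A (A + 5 * j + 4)) {N : ℕ}
    (hN : Nat.nth (fun n ↦ 1 ≤ n ∧ HasLeadingDigit (a n) 1) N ≤ A) :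
    ∃ A' ∈ Set.Icc N (A + 1), ∃ B' ≥ A' + j, ∀ i ∈ Ioc A' B', waitingTime a 1 i ∈ Icc 2 5 := by
  have hones :=
    (h.mono le_rfl (Nat.le_add_right _ 4)).le_card_filter_hasLeadingDigit_one ha le_rfl
  rw [filter_congr (q := fun n ↦ 1 ≤ n ∧ HasLeadingDigit (a n) 1)
    fun n hn ↦ (and_iff_right (Nat.one_le_of_lt (mem_Ioc.1 hn).1)).symm] at hones
  have hcount := count_succ_add_card_filter_Ioc (fun n ↦ 1 ≤ n ∧ HasLeadingDigit (a n) 1)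
    (Nat.le_add_right A (5 * j))
  have hNA := Nat.count_monotone (fun n ↦ 1 ≤ n ∧ HasLeadingDigit (a n) 1)
    (hN.trans (Nat.le_add_right A 1))
  rw [Nat.count_nth_of_infinite hS] at hNA
  exact ⟨_, ⟨hNA, Nat.count_le _⟩, _, by omega, fun i hi ↦
    h.waitingTime_mem_Icc ha hS (mem_Ioc.1 hi).1 (mem_Ioc.1 hi).2⟩

end StepsNearTwoFifths

lemma add_one_mul_log_sub_mul_log_mem_Icc {x : ℝ} (hx : 0 < x) :
    (x + 1) * log (x + 1) - x * log x ∈ Set.Icc (log x + 1) (log x + 1 + 1 / x) := by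
  have hy : 0 < (x + 1) / x := by positivity
  have hL : (x + 1) * log (x + 1) - x * log x = log x + (x + 1) * log ((x + 1) / x) := by
    rw [log_div (by positivity) hx.ne']
    ring
  have hL₁ : (x + 1) * log ((x + 1) / x) ≤ 1 + 1 / x := by
    have h := mul_le_mul_of_nonneg_left (log_le_sub_one_of_pos hy) (by positivity : 0 ≤ x + 1)
    have : (x + 1) * ((x + 1) / x - 1) = 1 + 1 / x := by field_simp; ring
    linarith
  have hL₀ : 1 ≤ (x + 1) * log ((x + 1) / x) := by
    have h := mul_le_mul_of_nonneg_left (one_sub_inv_le_log_of_pos hy) (by positivity : 0 ≤ x + 1)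
    have : (x + 1) * (1 - ((x + 1) / x)⁻¹) = 1 := by field_simp; ring
    linarith
  rw [hL]
  constructor <;> linarith

lemma add_one_mul_log_sub_mul_log_mem_Icc_of_le {t y : ℝ} (ht : 10 ^ 4 ≤ t) (hty : t ≤ y)
    (hy : y ≤ 65 / 64 * (t + 64)) :
    (y + 1) * log (y + 1) - y * log y ∈ Set.Icc (log t + 1) (log t + 1 + 3 / 100) := by
  have ht₀ : 0 < t := by linarith
  obtain ⟨hlo, hhi⟩ := add_one_mul_log_sub_mul_log_mem_Icc (ht₀.trans_le hty)
  have hlog₀ : log t ≤ log y := log_le_log ht₀ hty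
  have hlog₁ : log y ≤ log t + (1 / 64 + 65 / t) := by
    have := log_le_sub_one_of_pos (div_pos (ht₀.trans_le hty) ht₀)
    rw [log_div (ht₀.trans_le hty).ne' ht₀.ne'] at this
    have : y / t - 1 ≤ 1 / 64 + 65 / t := by
      rw [div_sub_one ht₀.ne', div_le_iff₀ ht₀]
      field_simp
      linarith
    linarith
  have hinv : 1 / y ≤ 1 / t := one_div_le_one_div_of_le ht₀ hty
  have h65 : 65 / t ≤ 65 / 10 ^ 4 := div_le_div_of_nonneg_left (by norm_num) (by norm_num) ht
  have h1 : 1 / t ≤ 1 / 10 ^ 4 := one_div_le_one_div_of_le (by norm_num) ht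
  constructor <;> linarith

noncomputable def smoothMersenne (n : ℕ) : ℝ := 2 ^ ((n : ℝ) * log n)

lemma smoothMersenne_pos (n : ℕ) : 0 < smoothMersenne n := rpow_pos_of_pos two_pos _

lemma logb_smoothMersenne (n : ℕ) :
    logb 10 (smoothMersenne n) = logb 10 2 * (n * log n) := by
  rw [smoothMersenne, logb_rpow_eq_mul_logb_of_pos two_pos, mul_comm]

lemma exists_stepsNearTwoFifths_smoothMersenne (N : ℕ) :
    ∃ m ≥ N, StepsNearTwoFifths (fun n ↦ logb 10 (smoothMersenne n)) (64 * m) (65 * m) := by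
  set c := logb 10 2
  have hc₀ : 1 / 4 < c := one_quarter_lt_logb_ten_two
  have hc₁ : c < 1 / 3 := logb_ten_two_lt_one_third
  obtain ⟨K, hK⟩ : ∃ K : ℕ, c * (log (64 * N + 10 ^ 4) + 1) ≤ K := ⟨_, Nat.le_ceil _⟩
  set t := exp ((K + 2 / 5) / c - 1)
  have hT : 64 * N + 10 ^ 4 ≤ t := by
    refine le_exp_of_log_le ?_
    rw [le_sub_iff_add_le, le_div_iff₀ (by linarith), mul_comm]
    exact hK.trans (by linarith)
  have hct : c * (log t + 1) = K + 2 / 5 := by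
    rw [log_exp]
    field_simp
    ring
  obtain ⟨m, hm₀, hm₁⟩ : ∃ m : ℕ, t ≤ 64 * m ∧ 64 * m < t + 64 :=
    ⟨⌈t / 64⌉₊, by linarith [Nat.le_ceil (t / 64)],
      by linarith [Nat.ceil_lt_add_one (by positivity : 0 ≤ t / 64)]⟩
  refine ⟨m, ?_, fun n hn₀ hn₁ ↦ ?_⟩
  · exact_mod_cast (show (N : ℝ) ≤ m by linarith)
  have hn₀' : t ≤ n := hm₀.trans (by exact_mod_cast hn₀)
  have hn₁' : (n : ℝ) ≤ 65 / 64 * (t + 64) := by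
    have : (n : ℝ) ≤ 65 * m := by exact_mod_cast hn₁
    linarith
  obtain ⟨hlo, hhi⟩ := add_one_mul_log_sub_mul_log_mem_Icc_of_le (by linarith) hn₀' hn₁'
  have hstep : logb 10 (smoothMersenne (n + 1)) - logb 10 (smoothMersenne n) =
      2 / 5 + c * ((n + 1) * log (n + 1) - n * log n - (log t + 1)) + K := by
    rw [logb_smoothMersenne, logb_smoothMersenne]
    push_cast
    linear_combination hct
  have hδ : 0 ≤ c * ((n + 1) * log (n + 1) - n * log n - (log t + 1)) := by
    nlinarith
  have hδ' : c * ((n + 1) * log (n + 1) - n * log n - (log t + 1)) ≤ 1 / 100 := by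
    nlinarith
  rw [hstep, Int.fract_add_natCast, Int.fract_eq_self.2 ⟨by linarith, by linarith⟩]
  constructor <;> linarith

lemma infinite_setOf_hasLeadingDigit_smoothMersenne_one :
    {n | 1 ≤ n ∧ HasLeadingDigit (smoothMersenne n) 1}.Infinite := by
  refine Set.infinite_of_forall_exists_gt fun N ↦ ?_
  obtain ⟨m, hm, hsteps⟩ := exists_stepsNearTwoFifths_smoothMersenne (N + 4)
  obtain ⟨k, hk, hdigit⟩ :=
    hsteps.exists_hasLeadingDigit_one smoothMersenne_pos le_rfl (by omega)
  obtain ⟨hk₁, -⟩ := mem_Icc.1 hk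
  exact ⟨64 * m + k, ⟨by omega, hdigit⟩, by omega⟩

lemma benfordP_eq_logb_sub {d : ℕ} (hd : 1 ≤ d) :
    benfordP d = logb 10 (d + 1) - logb 10 d := by
  have hd₀ : (0 : ℝ) < d := by exact_mod_cast hd
  rw [benfordP, ← logb_div (by positivity) hd₀.ne', add_div, div_self hd₀.ne']

lemma benfordP_one : benfordP 1 = logb 10 2 := by
  norm_num [benfordP]

lemma sum_benfordP_Icc_two_five : ∑ d ∈ Icc 2 5, benfordP d = logb 10 3 := by
  rw [show (3 : ℝ) = 6 / 2 by norm_num, logb_div (by norm_num) (by norm_num)]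
  norm_num [sum_Icc_succ_top, benfordP_eq_logb_sub]

lemma sum_mul_one_sub_pow_Icc_two_five_lt_one {c : ℝ} (hc₀ : 0 < c) (hc₁ : c ≤ 1) :
    ∑ k ∈ Icc 2 5, c * (1 - c) ^ (k - 1) < 1 := by
  have hsum : ∑ k ∈ Icc 2 5, c * (1 - c) ^ (k - 1) = (1 - c) - (1 - c) ^ 5 := by
    simp only [sum_Icc_succ_top, Nat.reduceAdd, Nat.reduceLeDiff, Icc_self, sum_singleton,
      Nat.add_one_sub_one]
    ring
  linarith [hsum, pow_nonneg (sub_nonneg.2 hc₁) 5]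

open Classical in
lemma LocallyBenfordDistributed.tendsto_card_pair {a : ℕ → ℝ}
    (h : LocallyBenfordDistributed a 2) {d₀ d₁ : ℕ} (hd₀ : d₀ ∈ Icc 1 9) (hd₁ : d₁ ∈ Icc 1 9) :
    Tendsto (fun N : ℕ ↦ (#{n ∈ Ioc 0 N | HasLeadingDigit (a n) d₀ ∧
        HasLeadingDigit (a (n + 1)) d₁} : ℝ) / N) atTop (nhds (benfordP d₀ * benfordP d₁)) := by
  rw [mem_Icc] at hd₀ hd₁
  have := h ![d₀, d₁] (by simp [Fin.forall_fin_two, hd₀, hd₁])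
  simp only [Fin.forall_fin_two, Fin.prod_univ_two] at this
  simpa only [natCard_setOf_eq_card_filter_Ioc, Matrix.cons_val_zero, Matrix.cons_val_one,
    Fin.val_zero, Fin.val_one, add_zero] using this

lemma BenfordWaitingTimes.tendsto_card {a : ℕ → ℝ} (h : BenfordWaitingTimes a) {d : ℕ}
    (hd : d ∈ Icc 1 9) {k : ℕ} (hk : 1 ≤ k) :
    Tendsto (fun N : ℕ ↦ (#{i ∈ Ioc 0 N | waitingTime a d i = k} : ℝ) / N) atTop
      (nhds (benfordP d * (1 - benfordP d) ^ (k - 1))) := by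
  rw [mem_Icc] at hd
  simpa only [natCard_setOf_eq_card_filter_Ioc] using h d hd.1 hd.2 k hk

open Classical in
theorem not_locallyBenfordDistributed_smoothMersenne :
    ¬LocallyBenfordDistributed smoothMersenne 2 := by
  intro h
  set u : ℕ → ℝ := fun N ↦ ∑ d ∈ Icc 2 5, (#{n ∈ Ioc 0 N | HasLeadingDigit (smoothMersenne n) 1 ∧
    HasLeadingDigit (smoothMersenne (n + 1)) d} : ℝ)
  have hu : Tendsto (fun N : ℕ ↦ u N / N) atTop
      (nhds (∑ d ∈ Icc 2 5, benfordP 1 * benfordP d)) := by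
    simp only [u, sum_div]
    exact tendsto_finsetSum _ fun d hd ↦
      h.tendsto_card_pair (by decide) (Icc_subset_Icc (by norm_num) (by norm_num) hd)
  have hwin : ∀ N : ℕ, ∃ A ≥ N, ∃ B : ℕ, (1 + 1 / 64) * (A : ℝ) ≤ B ∧
      1 / 6 * ((B : ℝ) - A) ≤ u B - u A := by
    intro N
    obtain ⟨m, hm, hsteps⟩ := exists_stepsNearTwoFifths_smoothMersenne (N + 24)
    refine ⟨64 * m, by omega, 65 * m, by push_cast; linarith, ?_⟩
    have hpairs := Nat.cast_le (α := ℝ).2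
      (hsteps.le_sum_card_filter_pair smoothMersenne_pos (j := m / 5) (by omega))
    have hm5 : (m : ℝ) ≤ 6 * (m / 5 : ℕ) := by exact_mod_cast (by omega : m ≤ 6 * (m / 5))
    simp only [u, ← sum_sub_distrib, cast_card_filter_Ioc_zero_sub _ (by omega : 64 * m ≤ 65 * m)]
    push_cast at hpairs ⊢
    linarith
  have hle := le_of_tendsto_div_of_windows (by norm_num) hu hwin
  rw [← mul_sum, sum_benfordP_Icc_two_five, benfordP_one] at hle
  nlinarith [logb_ten_two_lt_one_third, logb_ten_three_lt_half, one_quarter_lt_logb_ten_two,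
    logb_nonneg (b := 10) (by norm_num) (by norm_num : (1 : ℝ) ≤ 3)]

open Classical in
theorem not_benfordWaitingTimes_smoothMersenne : ¬BenfordWaitingTimes smoothMersenne := by
  intro h
  have hS := infinite_setOf_hasLeadingDigit_smoothMersenne_one
  set u : ℕ → ℝ := fun N ↦ ∑ k ∈ Icc 2 5, (#{i ∈ Ioc 0 N | waitingTime smoothMersenne 1 i = k} : ℝ)
  have hu : Tendsto (fun N : ℕ ↦ u N / N) atTop
      (nhds (∑ k ∈ Icc 2 5, benfordP 1 * (1 - benfordP 1) ^ (k - 1))) := by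
    simp only [u, sum_div]
    exact tendsto_finsetSum _ fun k hk ↦ h.tendsto_card (by decide)
      (one_le_two.trans (mem_Icc.1 hk).1)
  have hwin : ∀ N : ℕ, ∃ A ≥ N, ∃ B : ℕ, (1 + 1 / 400) * (A : ℝ) ≤ B ∧
      1 * ((B : ℝ) - A) ≤ u B - u A := by
    intro N
    obtain ⟨m, hm, hsteps⟩ := exists_stepsNearTwoFifths_smoothMersenne
      (Nat.nth (fun n ↦ 1 ≤ n ∧ HasLeadingDigit (smoothMersenne n) 1) N + 41)
    have hblock := hsteps.mono le_rfl (show 64 * m + 5 * ((m - 4) / 5) + 4 ≤ 65 * m by omega)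
    obtain ⟨A, ⟨hNA, hA⟩, B, hB, hwt⟩ :=
      hblock.exists_waitingTime_window smoothMersenne_pos hS (N := N) (by omega)
    refine ⟨A, hNA, B, ?_, ?_⟩
    · have : (401 * A : ℝ) ≤ 400 * B := by exact_mod_cast (by omega : 401 * A ≤ 400 * B)
      linarith
    · simp only [u, ← sum_sub_distrib, cast_card_filter_Ioc_zero_sub _ (by omega : A ≤ B)]
      rw [← Nat.cast_sum, ← card_eq_sum_card_fiberwise hwt, Nat.card_Ioc,
        Nat.cast_sub (by omega), one_mul]
  have hle := le_of_tendsto_div_of_windows (by norm_num) hu hwin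
  linarith [sum_mul_one_sub_pow_Icc_two_five_lt_one (c := benfordP 1)
    (by rw [benfordP_one]; linarith [one_quarter_lt_logb_ten_two])
    (by rw [benfordP_one]; linarith [logb_ten_two_lt_one_third])]

/-- The sequence `{2^{n log n}}` is not locally Benford distributed of order 2 and does
not have Benford distributed waiting times. -/
theorem smooth_mersenne_not_locallyBenford :
    ¬ LocallyBenfordDistributed (fun n : ℕ => (2 : ℝ) ^ ((n : ℝ) * Real.log n)) 2 ∧
      ¬ BenfordWaitingTimes (fun n : ℕ => (2 : ℝ) ^ ((n : ℝ) * Real.log n)) :=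
  ⟨not_locallyBenfordDistributed_smoothMersenne, not_benfordWaitingTimes_smoothMersenne⟩
end
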